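/- Define T₀(s,λ) = (1/√(2λs))·∫₀¹ dξ/√((1-ξ³)/3 - s(1-ξ⁴)/4) for s ∈ (0,1), λ > 0. Then lim_{s→0⁺} T₀(s,λ) = +∞ and lim_{s→1⁻} T₀(s,λ) = +∞. -/

import Mathlib

/-!
The quantity under the square root factors as
`(1 - ξ) * ((1 + ξ + ξ²) / 3 - s (1 + ξ) (1 + ξ²) / 4)`, and on `[0, 1]` it lies between
`(1 - s)(1 - ξ) / 3` and, for `ξ ≤ s`, `3/2 (1 - ξ)²`. The lower bound makes the integral finite
for `s < 1`. As `s → 0` the integrand stays `≥ 1` on `[0, 1)`, so the integral is bounded below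
while the prefactor `1 / √(2λs)` blows up. As `s → 1` the upper bound gives
`∫₀ˢ dξ / (√(3/2) (1 - ξ)) = -log (1 - s) / √(3/2)` as a lower bound for the integral, while the
prefactor stays above `1 / √(2λ)`.
-/

open intervalIntegral

noncomputable def T₀ : ℝ → ℝ → ℝ :=
  fun s lam => (1 / Real.sqrt (2 * lam * s)) *
    ∫ ξ in (0:ℝ)..1, 1 / Real.sqrt ((1 - ξ^3)/3 - s * (1 - ξ^4)/4)

open Real MeasureTheory Filter Set Topology

/-- For `u(0) = s`, energy conservation gives `u'² / 2 = λ s³ · potentialDrop s (u / s)`. -/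
noncomputable def potentialDrop (s ξ : ℝ) : ℝ := (1 - ξ ^ 3) / 3 - s * (1 - ξ ^ 4) / 4

noncomputable def timeIntegrand (s ξ : ℝ) : ℝ := 1 / √(potentialDrop s ξ)

lemma T₀_eq (s lam : ℝ) :
    T₀ s lam = (√(2 * lam * s))⁻¹ * ∫ ξ in (0:ℝ)..1, timeIntegrand s ξ := by
  rw [T₀, one_div]; rfl

section potentialDrop

variable {s ξ : ℝ}

lemma one_sub_mul_one_sub_le_potentialDrop (hs0 : 0 ≤ s) (hs1 : s ≤ 1) (hξ0 : 0 ≤ ξ)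
    (hξ1 : ξ ≤ 1) : (1 - s) * (1 - ξ) / 3 ≤ potentialDrop s ξ := by
  unfold potentialDrop
  nlinarith [mul_nonneg (mul_nonneg hs0 (sq_nonneg (ξ - 1))) (sq_nonneg ξ),
    mul_nonneg (mul_nonneg hs0 (sq_nonneg (ξ - 1))) hξ0,
    mul_nonneg (mul_nonneg (sub_nonneg.2 hs1) hξ0) (sub_nonneg.2 hξ1),
    mul_nonneg (mul_nonneg (mul_nonneg (sub_nonneg.2 hs1) hξ0) (sub_nonneg.2 hξ1)) hξ0]

lemma potentialDrop_le_one (hs0 : 0 ≤ s) (hξ0 : 0 ≤ ξ) (hξ1 : ξ ≤ 1) :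
    potentialDrop s ξ ≤ 1 := by
  unfold potentialDrop
  have : ξ ^ 4 ≤ 1 := pow_le_one₀ hξ0 hξ1
  nlinarith [pow_nonneg hξ0 3, mul_nonneg hs0 (sub_nonneg.2 this)]

lemma potentialDrop_le_sq (hξ0 : 0 ≤ ξ) (hξs : ξ ≤ s) (hs1 : s ≤ 1) :
    potentialDrop s ξ ≤ 3 / 2 * (1 - ξ) ^ 2 := by
  unfold potentialDrop
  have hξ1 : ξ ≤ 1 := hξs.trans hs1
  nlinarith [mul_nonneg (sub_nonneg.2 hξs) (mul_nonneg hξ0 (sub_nonneg.2 hξ1)),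
    mul_nonneg (mul_nonneg (sub_nonneg.2 hξs) (mul_nonneg hξ0 (sub_nonneg.2 hξ1))) hξ0,
    mul_nonneg (mul_nonneg (sub_nonneg.2 hs1) (mul_nonneg hξ0 (sub_nonneg.2 hξ1))) hξ0,
    mul_nonneg (mul_nonneg (hξ0.trans hξs) (sq_nonneg (ξ - 1))) (mul_nonneg hξ0 (sub_nonneg.2 hξ1)),
    mul_nonneg (mul_nonneg (hξ0.trans hξs) (sq_nonneg (ξ - 1))) hξ0]

end potentialDrop

lemma intervalIntegrable_one_div_sqrt_of_mul_one_sub_le {F : ℝ → ℝ} (hF : Measurable F)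
    {c : ℝ} (hc : 0 < c) (hle : ∀ ξ ∈ Ioo (0:ℝ) 1, c * (1 - ξ) ≤ F ξ) :
    IntervalIntegrable (fun ξ => 1 / √(F ξ)) volume 0 1 := by
  rw [intervalIntegrable_iff_integrableOn_Ioo_of_le zero_le_one]
  have hdom : IntegrableOn (fun ξ : ℝ => c ^ (-(1/2) : ℝ) * (1 - ξ) ^ (-(1/2) : ℝ)) (Ioo 0 1) := by
    have := ((intervalIntegrable_rpow' (r := -(1/2)) (a := 0) (b := 1) (by norm_num)).comp_sub_left
      1).symm
    simp only [sub_self, sub_zero] at this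
    exact (this.const_mul _).1.mono_set Ioo_subset_Ioc_self
  refine hdom.mono' (measurable_const.div hF.sqrt).aestronglyMeasurable
    (ae_restrict_of_forall_mem measurableSet_Ioo fun ξ hξ => ?_)
  have h1ξ : 0 < 1 - ξ := sub_pos.2 hξ.2
  rw [norm_of_nonneg (by positivity)]
  calc 1 / √(F ξ) ≤ 1 / √(c * (1 - ξ)) :=
        one_div_le_one_div_of_le (by positivity) (sqrt_le_sqrt (hle ξ hξ))
    _ = c ^ (-(1/2) : ℝ) * (1 - ξ) ^ (-(1/2) : ℝ) := by
        rw [← mul_rpow hc.le h1ξ.le, rpow_neg (by positivity), ← sqrt_eq_rpow, one_div]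

lemma integral_inv_one_sub {s : ℝ} (hs : s < 1) :
    ∫ ξ in (0:ℝ)..s, (1 - ξ)⁻¹ = -log (1 - s) := by
  rw [intervalIntegral.integral_comp_sub_left (fun x => x⁻¹), sub_zero,
    integral_inv_of_pos (by linarith) one_pos, one_div, log_inv]

section timeIntegrand

variable {s ξ : ℝ}

lemma intervalIntegrable_timeIntegrand (hs0 : 0 ≤ s) (hs1 : s < 1) :
    IntervalIntegrable (timeIntegrand s) volume 0 1 :=
  intervalIntegrable_one_div_sqrt_of_mul_one_sub_le (by unfold potentialDrop; fun_prop)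
    (c := (1 - s) / 3) (by linarith) fun ξ hξ => by
      have := one_sub_mul_one_sub_le_potentialDrop hs0 hs1.le hξ.1.le hξ.2.le
      linarith

lemma one_le_timeIntegrand (hs0 : 0 ≤ s) (hs1 : s < 1) (hξ0 : 0 ≤ ξ) (hξ1 : ξ < 1) :
    1 ≤ timeIntegrand s ξ := by
  have hpos : 0 < potentialDrop s ξ := by
    have := one_sub_mul_one_sub_le_potentialDrop hs0 hs1.le hξ0 hξ1.le
    nlinarith
  exact one_le_one_div (sqrt_pos.2 hpos) (sqrt_le_one.2 (potentialDrop_le_one hs0 hξ0 hξ1.le))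

lemma inv_one_sub_le_timeIntegrand (hξ0 : 0 ≤ ξ) (hξs : ξ ≤ s) (hs1 : s < 1) :
    (√(3 / 2))⁻¹ * (1 - ξ)⁻¹ ≤ timeIntegrand s ξ := by
  have h1ξ : 0 < 1 - ξ := by linarith
  have hpos : 0 < potentialDrop s ξ := by
    have := one_sub_mul_one_sub_le_potentialDrop (hξ0.trans hξs) hs1.le hξ0 (by linarith)
    nlinarith
  calc (√(3 / 2))⁻¹ * (1 - ξ)⁻¹ = 1 / √(3 / 2 * (1 - ξ) ^ 2) := by
        rw [sqrt_mul (by norm_num), sqrt_sq h1ξ.le, one_div, mul_inv]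
    _ ≤ timeIntegrand s ξ :=
        one_div_le_one_div_of_le (sqrt_pos.2 hpos)
          (sqrt_le_sqrt (potentialDrop_le_sq hξ0 hξs hs1.le))

lemma integral_le_integral_timeIntegrand {g : ℝ → ℝ} {b : ℝ} (hs0 : 0 ≤ s) (hs1 : s < 1)
    (hb0 : 0 ≤ b) (hb1 : b ≤ 1) (hg : IntervalIntegrable g volume 0 b)
    (hgle : ∀ ξ ∈ Icc 0 b, g ξ ≤ timeIntegrand s ξ) :
    ∫ ξ in (0:ℝ)..b, g ξ ≤ ∫ ξ in (0:ℝ)..1, timeIntegrand s ξ := by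
  have hint := intervalIntegrable_timeIntegrand hs0 hs1
  refine (integral_mono_on hb0 hg (hint.mono_set ?_) hgle).trans
    (integral_mono_interval le_rfl hb0 hb1 (ae_of_all _ fun ξ => ?_) hint)
  · rw [uIcc_of_le hb0, uIcc_of_le zero_le_one]
    exact Icc_subset_Icc le_rfl hb1
  · exact one_div_nonneg.2 (sqrt_nonneg _)

lemma half_le_integral_timeIntegrand (hs0 : 0 ≤ s) (hs1 : s < 1) :
    1 / 2 ≤ ∫ ξ in (0:ℝ)..1, timeIntegrand s ξ := by
  simpa using integral_le_integral_timeIntegrand hs0 hs1 (by norm_num) (by norm_num)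
    intervalIntegrable_const fun ξ hξ => one_le_timeIntegrand hs0 hs1 hξ.1 (by linarith [hξ.2])

lemma neg_log_one_sub_le_integral_timeIntegrand (hs0 : 0 ≤ s) (hs1 : s < 1) :
    (√(3 / 2))⁻¹ * -log (1 - s) ≤ ∫ ξ in (0:ℝ)..1, timeIntegrand s ξ := by
  have hcont : ContinuousOn (fun ξ : ℝ => (√(3 / 2))⁻¹ * (1 - ξ)⁻¹) (uIcc 0 s) := by
    refine continuousOn_const.mul (ContinuousOn.inv₀ (by fun_prop) fun ξ hξ => ?_)
    rw [uIcc_of_le hs0] at hξ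
    linarith [hξ.2]
  have := integral_le_integral_timeIntegrand hs0 hs1 hs0 hs1.le hcont.intervalIntegrable
    fun ξ hξ => inv_one_sub_le_timeIntegrand hξ.1 hξ.2 hs1
  rwa [intervalIntegral.integral_const_mul, integral_inv_one_sub hs1] at this

end timeIntegrand

lemma tendsto_inv_sqrt_mul_nhdsGT_zero {a : ℝ} (ha : 0 < a) :
    Tendsto (fun s => (√(a * s))⁻¹) (𝓝[>] 0) atTop := by
  refine tendsto_inv_nhdsGT_zero.comp (tendsto_nhdsWithin_iff.2 ⟨?_, ?_⟩)
  · simpa using ((by fun_prop : Continuous fun s => √(a * s)).tendsto 0).mono_left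
      nhdsWithin_le_nhds
  · filter_upwards [self_mem_nhdsWithin] with s hs
    exact sqrt_pos.2 (mul_pos ha hs)

lemma tendsto_neg_log_one_sub_nhdsLT_one :
    Tendsto (fun s => -log (1 - s)) (𝓝[<] 1) atTop := by
  refine tendsto_neg_atBot_atTop.comp (tendsto_log_nhdsGT_zero.comp ?_)
  refine tendsto_nhdsWithin_iff.2 ⟨?_, ?_⟩
  · exact ((by fun_prop : Continuous fun s : ℝ => 1 - s).tendsto' 1 0 (sub_self 1)).mono_left
      nhdsWithin_le_nhds
  · filter_upwards [self_mem_nhdsWithin] with s (hs : s < 1)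
    exact sub_pos.2 hs

theorem stmt_6 (lam : ℝ) (hlam : 0 < lam) :
    Filter.Tendsto (fun s => T₀ s lam) (nhdsWithin 0 (Set.Ioo (0:ℝ) 1)) Filter.atTop ∧
      Filter.Tendsto (fun s => T₀ s lam) (nhdsWithin 1 (Set.Ioo (0:ℝ) 1)) Filter.atTop := by
  constructor
  · have hprefactor := (tendsto_inv_sqrt_mul_nhdsGT_zero (by positivity : 0 < 2 * lam)).mono_left
      (nhdsWithin_mono 0 (Ioo_subset_Ioi_self : Ioo (0:ℝ) 1 ⊆ _))
    refine tendsto_atTop_mono' _ ?_ (hprefactor.atTop_mul_const (by norm_num : (0:ℝ) < 1 / 2))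
    filter_upwards [self_mem_nhdsWithin] with s hs
    rw [T₀_eq]
    exact mul_le_mul_of_nonneg_left (half_le_integral_timeIntegrand hs.1.le hs.2) (by positivity)
  · have hlog := tendsto_neg_log_one_sub_nhdsLT_one.mono_left
      (nhdsWithin_mono 1 (Ioo_subset_Iio_self : Ioo (0:ℝ) 1 ⊆ _))
    refine tendsto_atTop_mono' _ ?_
      (hlog.const_mul_atTop (by positivity : 0 < (√(2 * lam))⁻¹ * (√(3 / 2))⁻¹))
    filter_upwards [self_mem_nhdsWithin] with s ⟨hs0, hs1⟩
    have hlog_nonneg : 0 ≤ (√(3 / 2))⁻¹ * -log (1 - s) :=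
      mul_nonneg (by positivity) (neg_nonneg.2 (log_nonpos (by linarith) (by linarith)))
    rw [T₀_eq, mul_assoc]
    refine mul_le_mul ?_ (neg_log_one_sub_le_integral_timeIntegrand hs0.le hs1) hlog_nonneg
      (by positivity)
    exact inv_anti₀ (by positivity) (sqrt_le_sqrt (by nlinarith))
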